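/- Let k ≥ 1 and n = 2^k. Every subset y ⊆ [n] equals v_i(x) for a unique pair (x, i) with x ∈ ⟨C_k⟩ and 0 ≤ i ≤ 2n−1, where v_0(x), …, v_{2n−1}(x) are the vertices of the cycle C(x). Equivalently, the vertex sets of the isometric cycles C(x) of length 2n, for x ∈ ⟨C_k⟩, partition the vertex set of the hypercube Q_n. -/

import Mathlib

open scoped symmDiff

/-- `Ok k` is the family `O_k = {{2j−1, 2j+1} : 1 ≤ j ≤ 2^{k−1}−1}` (empty for `k = 1`). -/
def Ok (k : ℕ) : Finset (Finset ℕ) :=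
  (Finset.Icc 1 (2 ^ (k - 1) - 1)).image (fun j => ({2 * j - 1, 2 * j + 1} : Finset ℕ))

/-- `2·X := {{2a, 2b} : {a,b} ∈ X}`. -/
def twoMul (X : Finset (Finset ℕ)) : Finset (Finset ℕ) :=
  X.image (fun s => s.image (fun a => 2 * a))

/-- `C_1 = ∅` and `C_k = O_k ∪ 2·C_{k−1}` for `k ≥ 2`. -/
def Ck : ℕ → Finset (Finset ℕ)
  | 0 => ∅
  | 1 => ∅
  | (k + 2) => Ok (k + 2) ∪ twoMul (Ck (k + 1))

/-- The span of a family `X` of subsets under symmetric difference: all symmetric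
differences `x_1 ∆ ⋯ ∆ x_t` of members of `X` (with `t = 0` giving `∅`). -/
def spanSD (X : Finset (Finset ℕ)) : Set (Finset ℕ) :=
  {y | ∃ l : List (Finset ℕ), (∀ s ∈ l, s ∈ X) ∧ l.foldr (· ∆ ·) ∅ = y}

/-- The `i`-th vertex `v_i` of the cycle `C(x)` of length `2n` in `Q_n`:
`v_i = x ∆ [i]` and `v_{n+i} = ([n] ∖ x) ∆ [i]` for `0 ≤ i ≤ n−1`. -/
def cycVert (n : ℕ) (x : Finset ℕ) (i : ℕ) : Finset ℕ :=
  if i < n then x ∆ Finset.Icc 1 i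
  else (Finset.Icc 1 n \ x) ∆ Finset.Icc 1 (i - n)

open Finset

/-- parity of the number of elements of 2-adic valuation `j`. -/
def phiZ (x : Finset ℕ) (j : ℕ) : ZMod 2 :=
  ((x.filter fun m => padicValNat 2 m = j).card : ZMod 2)

lemma cardZ_symmDiff (s t : Finset ℕ) :
    (((s ∆ t).card : ZMod 2)) = (s.card : ZMod 2) + t.card := by
  have h1 : (s ∪ t).card + (s ∩ t).card = s.card + t.card :=
    Finset.card_union_add_card_inter s t
  have h2 : s ∆ t = (s ∪ t) \ (s ∩ t) := symmDiff_eq_sup_sdiff_inf ..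
  have h3 : (s ∩ t) ⊆ (s ∪ t) := (Finset.inter_subset_left).trans Finset.subset_union_left
  have h4 : (s ∆ t).card = (s ∪ t).card - (s ∩ t).card := by rw [h2, Finset.card_sdiff_of_subset h3]
  have h5 : (s ∩ t).card ≤ (s ∪ t).card := Finset.card_le_card h3
  have : (s ∆ t).card + 2 * (s ∩ t).card = s.card + t.card := by omega
  calc ((s ∆ t).card : ZMod 2) = (((s ∆ t).card + 2 * (s ∩ t).card : ℕ) : ZMod 2) := by
        push_cast; ring_nf; rw [show (2 : ZMod 2) = 0 by decide]; ring
    _ = (s.card : ZMod 2) + t.card := by rw [this]; push_cast; ring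

lemma filter_symmDiff' (p : ℕ → Prop) [DecidablePred p] (s t : Finset ℕ) :
    (s ∆ t).filter p = s.filter p ∆ t.filter p := by
  ext m; simp [Finset.mem_symmDiff, Finset.mem_filter]; tauto

lemma phiZ_symmDiff (s t : Finset ℕ) (j : ℕ) :
    phiZ (s ∆ t) j = phiZ s j + phiZ t j := by
  unfold phiZ; rw [filter_symmDiff', cardZ_symmDiff]

lemma phiZ_empty (j : ℕ) : phiZ ∅ j = 0 := by simp [phiZ]

lemma even_iff_cardZ (n : ℕ) : Even n ↔ (n : ZMod 2) = 0 := by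
  rw [ZMod.natCast_eq_zero_iff]; exact even_iff_two_dvd

/- span basics -/
lemma mem_spanSD_of_mem {X : Finset (Finset ℕ)} {s : Finset ℕ} (h : s ∈ X) :
    s ∈ spanSD X := ⟨[s], by simpa using h, by simp⟩

lemma empty_mem_spanSD (X : Finset (Finset ℕ)) : (∅ : Finset ℕ) ∈ spanSD X := ⟨[], by simp, rfl⟩

lemma foldr_symmDiff_init (l : List (Finset ℕ)) (c : Finset ℕ) :
    l.foldr (· ∆ ·) c = (l.foldr (· ∆ ·) ∅) ∆ c := by
  induction l with
  | nil => show c = ∅ ∆ c; rw [show (∅ : Finset ℕ) = ⊥ from rfl, bot_symmDiff]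
  | cons a l ih => simp [List.foldr_cons, ih, symmDiff_assoc]

lemma symmDiff_mem_spanSD {X : Finset (Finset ℕ)} {a b : Finset ℕ}
    (ha : a ∈ spanSD X) (hb : b ∈ spanSD X) : a ∆ b ∈ spanSD X := by
  obtain ⟨l1, hl1, hf1⟩ := ha
  obtain ⟨l2, hl2, hf2⟩ := hb
  refine ⟨l1 ++ l2, ?_, ?_⟩
  · intro s hs; rcases List.mem_append.1 hs with h | h; exacts [hl1 s h, hl2 s h]
  · rw [List.foldr_append, hf2, foldr_symmDiff_init, hf1]

lemma spanSD_mono {X Y : Finset (Finset ℕ)} (h : X ⊆ Y) : spanSD X ⊆ spanSD Y := by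
  rintro y ⟨l, hl, hf⟩; exact ⟨l, fun s hs => h (hl s hs), hf⟩

lemma spanSD_subset {X : Finset (Finset ℕ)} {B : Finset ℕ} (hX : ∀ s ∈ X, s ⊆ B) :
    ∀ y ∈ spanSD X, y ⊆ B := by
  rintro y ⟨l, hl, rfl⟩
  induction l with
  | nil => simp
  | cons a l ih =>
      simp only [List.foldr_cons]
      refine symmDiff_le_sup.trans (Finset.union_subset (hX a (hl a (by simp))) ?_)
      exact ih (fun s hs => hl s (by simp [hs]))

lemma spanSD_phiZ {X : Finset (Finset ℕ)} (hX : ∀ s ∈ X, ∀ j, phiZ s j = 0) :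
    ∀ y ∈ spanSD X, ∀ j, phiZ y j = 0 := by
  rintro y ⟨l, hl, rfl⟩ j
  induction l with
  | nil => simp [phiZ_empty]
  | cons a l ih =>
      simp only [List.foldr_cons]
      rw [phiZ_symmDiff, hX a (hl a (by simp)) j, ih (fun s hs => hl s (by simp [hs])), add_zero]

/- ### Generators of `Ck` -/

lemma Ck_succ_eq (K : ℕ) (hK : 1 ≤ K) : Ck (K + 1) = Ok (K + 1) ∪ twoMul (Ck K) := by
  obtain ⟨m, rfl⟩ : ∃ m, K = m + 1 := ⟨K - 1, by omega⟩
  rfl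

lemma val_two_mul (a : ℕ) (ha : a ≠ 0) :
    padicValNat 2 (2 * a) = padicValNat 2 a + 1 := by
  rw [padicValNat.mul (by norm_num) ha, padicValNat.self one_lt_two]; ring

lemma Ck_struct : ∀ k, ∀ s ∈ Ck k, ∃ a b : ℕ, a ≠ b ∧ s = {a, b} ∧
    padicValNat 2 a = padicValNat 2 b ∧ 1 ≤ a ∧ a ≤ 2 ^ k - 1 ∧ 1 ≤ b ∧ b ≤ 2 ^ k - 1 := by
  intro k
  induction k using Nat.strong_induction_on with
  | _ k ih =>
    match k with
    | 0 => intro s hs; simp [Ck] at hs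
    | 1 => intro s hs; simp [Ck] at hs
    | (m + 2) =>
      intro s hs
      rw [show Ck (m+2) = Ok (m+2) ∪ twoMul (Ck (m+1)) from rfl, Finset.mem_union] at hs
      rcases hs with hs | hs
      · simp only [Ok, Finset.mem_image, Finset.mem_Icc] at hs
        obtain ⟨j, ⟨hj1, hj2⟩, rfl⟩ := hs
        have h2 : 2 * j + 1 ≤ 2 ^ (m + 2) - 1 := by
          have h4 : (2:ℕ) ^ (m+2) = 4 * 2 ^ m := by ring
          have h5 : (2:ℕ) ^ (m+1) = 2 * 2 ^ m := by ring
          have h6 : (1:ℕ) ≤ 2 ^ m := Nat.one_le_two_pow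
          simp only [show m + 2 - 1 = m + 1 from rfl] at hj2
          omega
        refine ⟨2*j - 1, 2*j + 1, by omega, rfl, ?_, by omega, by omega, by omega, h2⟩
        rw [padicValNat.eq_zero_of_not_dvd (by omega), padicValNat.eq_zero_of_not_dvd (by omega)]
      · simp only [twoMul, Finset.mem_image] at hs
        obtain ⟨t, ht, rfl⟩ := hs
        obtain ⟨a, b, hab, rfl, hval, ha1, ha2, hb1, hb2⟩ := ih (m+1) (by omega) t ht
        refine ⟨2*a, 2*b, by omega, ?_, ?_, by omega, ?_, by omega, ?_⟩
        · simp [Finset.image_insert]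
        · rw [val_two_mul a (by omega), val_two_mul b (by omega), hval]
        · have h4 : (2:ℕ) ^ (m+2) = 4 * 2 ^ m := by ring
          have h5 : (2:ℕ) ^ (m+1) = 2 * 2 ^ m := by ring
          have h6 : (1:ℕ) ≤ 2 ^ m := Nat.one_le_two_pow
          omega
        · have h4 : (2:ℕ) ^ (m+2) = 4 * 2 ^ m := by ring
          have h5 : (2:ℕ) ^ (m+1) = 2 * 2 ^ m := by ring
          have h6 : (1:ℕ) ≤ 2 ^ m := Nat.one_le_two_pow
          omega

lemma phiZ_pair (a b : ℕ) (hab : a ≠ b) (hval : padicValNat 2 a = padicValNat 2 b) (j : ℕ) :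
    phiZ {a, b} j = 0 := by
  unfold phiZ
  by_cases h : padicValNat 2 a = j
  · rw [Finset.filter_insert, if_pos h, Finset.filter_singleton, if_pos (hval ▸ h)]
    rw [Finset.card_insert_of_notMem (by simp [hab]), Finset.card_singleton]
    exact ZMod.natCast_self 2
  · rw [Finset.filter_insert, if_neg h, Finset.filter_singleton, if_neg (hval ▸ h)]
    simp

lemma Ck_phiZ (k : ℕ) : ∀ s ∈ Ck k, ∀ j, phiZ s j = 0 := by
  intro s hs j
  obtain ⟨a, b, hab, rfl, hval, _⟩ := Ck_struct k s hs
  exact phiZ_pair a b hab hval j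

lemma Ck_subsets (k : ℕ) : ∀ s ∈ Ck k, s ⊆ Finset.Icc 1 (2 ^ k) := by
  intro s hs
  obtain ⟨a, b, hab, rfl, hval, ha1, ha2, hb1, hb2⟩ := Ck_struct k s hs
  have : (1:ℕ) ≤ 2 ^ k := Nat.one_le_two_pow
  intro m hm
  simp only [Finset.mem_insert, Finset.mem_singleton] at hm
  rcases hm with rfl | rfl <;> simp only [Finset.mem_Icc] <;> omega

lemma span_Ck_phiZ {k : ℕ} {x : Finset ℕ} (hx : x ∈ spanSD (Ck k)) (j : ℕ) : phiZ x j = 0 :=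
  spanSD_phiZ (Ck_phiZ k) x hx j

lemma span_Ck_subset {k : ℕ} {x : Finset ℕ} (hx : x ∈ spanSD (Ck k)) :
    x ⊆ Finset.Icc 1 (2 ^ k) :=
  spanSD_subset (Ck_subsets k) x hx

/- ### Gray code -/

def gray (i : ℕ) : ℕ := i ^^^ i / 2

def grayInv : ℕ → ℕ → ℕ
  | 0, _ => 0
  | (t+1), g => g ^^^ grayInv t (g / 2)

def bitZ (j m : ℕ) : ZMod 2 := if m.testBit j then 1 else 0

lemma gray_div_two (i : ℕ) : gray i / 2 = gray (i / 2) := by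
  unfold gray
  rw [Nat.xor_div_two, Nat.div_div_eq_div_mul]

lemma grayInv_gray : ∀ t i, i < 2 ^ t → grayInv t (gray i) = i := by
  intro t
  induction t with
  | zero => intro i hi; interval_cases i; rfl
  | succ t ih =>
      intro i hi
      show gray i ^^^ grayInv t (gray i / 2) = i
      rw [gray_div_two, ih (i/2) (by omega)]
      unfold gray
      rw [Nat.xor_assoc, Nat.xor_self, Nat.xor_zero]

lemma gray_lt {t i : ℕ} (hi : i < 2 ^ t) : gray i < 2 ^ t :=
  Nat.xor_lt_two_pow hi (lt_of_le_of_lt (Nat.div_le_self i 2) hi)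

lemma gray_inj {t i i' : ℕ} (hi : i < 2 ^ t) (hi' : i' < 2 ^ t) (h : gray i = gray i') :
    i = i' := by
  rw [← grayInv_gray t i hi, ← grayInv_gray t i' hi', h]

lemma two_pow_add_eq_xor {j r : ℕ} (hr : r < 2 ^ j) : 2 ^ j + r = 2 ^ j ^^^ r := by
  apply Nat.eq_of_testBit_eq
  intro i
  rcases lt_trichotomy i j with h | rfl | h
  · rw [Nat.testBit_two_pow_add_gt h, Nat.testBit_xor, Nat.testBit_two_pow]
    have hji : j ≠ i := by omega
    simp [hji]
  · rw [Nat.testBit_two_pow_add_eq, Nat.testBit_xor, Nat.testBit_two_pow,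
      Nat.testBit_eq_false_of_lt hr]
    simp
  · have h1 : 2 ^ j + r < 2 ^ i := by
      have e1 : (2:ℕ) ^ (j+1) ≤ 2 ^ i := Nat.pow_le_pow_right (by norm_num) (by omega)
      have e2 : (2:ℕ) ^ (j+1) = 2 * 2^j := by ring
      omega
    have h2 : r < 2 ^ i := by omega
    rw [Nat.testBit_eq_false_of_lt h1, Nat.testBit_xor, Nat.testBit_two_pow,
      Nat.testBit_eq_false_of_lt h2]
    have hji : j ≠ i := by omega
    simp [hji]

lemma gray_two_pow_add {K r : ℕ} (hK : 1 ≤ K) (hr : r < 2 ^ K) :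
    gray (2 ^ K + r) = gray (2 ^ K) ^^^ gray r := by
  obtain ⟨m, rfl⟩ : ∃ m, K = m + 1 := ⟨K - 1, by omega⟩
  have hd : (2 ^ (m+1) + r) / 2 = 2 ^ m + r / 2 := by
    have : (2:ℕ) ^ (m+1) = 2 ^ m * 2 := by ring
    rw [this, Nat.add_comm, Nat.add_mul_div_right _ _ (by norm_num), Nat.add_comm]
  have hr2 : r / 2 < 2 ^ m := by
    have : (2:ℕ) ^ (m+1) = 2 * 2 ^ m := by ring
    omega
  have hg2 : (2:ℕ) ^ (m+1) / 2 = 2 ^ m := by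
    have : (2:ℕ) ^ (m+1) = 2 ^ m * 2 := by ring
    omega
  unfold gray
  rw [hd, hg2, two_pow_add_eq_xor hr, two_pow_add_eq_xor hr2]
  -- AC rearrangement
  rw [Nat.xor_comm (2^m) (r/2)]
  rw [Nat.xor_assoc, ← Nat.xor_assoc r (r/2) (2^m), Nat.xor_comm (r ^^^ r/2) (2^m),
    ← Nat.xor_assoc, ← Nat.xor_assoc, Nat.xor_assoc (2^(m+1) ^^^ 2^m) r (r/2)]

lemma bitZ_xor (j a b : ℕ) : bitZ j (a ^^^ b) = bitZ j a + bitZ j b := by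
  unfold bitZ
  rw [Nat.testBit_xor]
  cases ha : a.testBit j <;> cases hb : b.testBit j <;> simp <;> decide

/- ### Counting valuations in intervals -/

lemma count_val (N j : ℕ) :
    ((Finset.Icc 1 N).filter fun m => padicValNat 2 m = j).card = N / 2 ^ j - N / 2 ^ (j+1) := by
  have hIcc : Finset.Icc 1 N = Finset.Ioc 0 N := rfl
  have hchar : ∀ m ∈ Finset.Ioc 0 N,
      (padicValNat 2 m = j) ↔ (2 ^ j ∣ m ∧ ¬ 2 ^ (j+1) ∣ m) := by
    intro m hm
    simp only [Finset.mem_Ioc] at hm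
    have hm0 : m ≠ 0 := by omega
    haveI : Fact (Nat.Prime 2) := ⟨Nat.prime_two⟩
    rw [padicValNat_dvd_iff_le hm0, padicValNat_dvd_iff_le hm0]
    omega
  rw [hIcc, Finset.filter_congr hchar]
  have hsub : (Finset.Ioc 0 N).filter (fun m => (2:ℕ) ^ (j+1) ∣ m) ⊆
      (Finset.Ioc 0 N).filter (fun m => (2:ℕ) ^ j ∣ m) := by
    intro m hm
    simp only [Finset.mem_filter] at hm ⊢
    exact ⟨hm.1, dvd_trans (pow_dvd_pow 2 (by omega)) hm.2⟩
  have heq : (Finset.Ioc 0 N).filter (fun m => 2 ^ j ∣ m ∧ ¬ (2:ℕ) ^ (j+1) ∣ m) =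
      (Finset.Ioc 0 N).filter (fun m => (2:ℕ) ^ j ∣ m) \
      (Finset.Ioc 0 N).filter (fun m => (2:ℕ) ^ (j+1) ∣ m) := by
    ext m
    simp only [Finset.mem_filter, Finset.mem_sdiff]
    tauto
  rw [heq, Finset.card_sdiff_of_subset hsub, Nat.Ioc_filter_dvd_card_eq_div, Nat.Ioc_filter_dvd_card_eq_div]

lemma phiZ_Icc (N j : ℕ) : phiZ (Finset.Icc 1 N) j = bitZ j (gray N) := by
  unfold phiZ
  rw [count_val]
  have hdd : N / 2 ^ (j+1) = N / 2 ^ j / 2 := by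
    rw [Nat.div_div_eq_div_mul, pow_succ]
  have h1 : N / 2 ^ j = 2 * (N / 2 ^ (j+1)) + (N / 2 ^ j) % 2 := by
    rw [hdd]; omega
  have h2 : N / 2 ^ j - N / 2 ^ (j+1) = N / 2 ^ (j+1) + (N / 2 ^ j) % 2 := by omega
  rw [h2]
  unfold bitZ gray
  rw [Nat.testBit_xor]
  have hb1 : N.testBit j = decide ((N / 2^j) % 2 = 1) := Nat.testBit_eq_decide_div_mod_eq
  have hb2 : (N/2).testBit j = decide ((N / 2^(j+1)) % 2 = 1) := by
    rw [Nat.testBit_div_two, Nat.testBit_eq_decide_div_mod_eq]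
  rw [hb1, hb2]
  push_cast
  rw [show ((N / 2 ^ (j+1) : ℕ) : ZMod 2) = (((N / 2 ^ (j+1)) % 2 : ℕ) : ZMod 2) from
    (ZMod.natCast_mod _ 2).symm]
  rcases Nat.mod_two_eq_zero_or_one (N / 2 ^ j) with h | h <;>
    rcases Nat.mod_two_eq_zero_or_one (N / 2 ^ (j+1)) with h' | h' <;>
      rw [h, h'] <;> decide

/- ### Offsets of the cycle -/

def offSet (n i : ℕ) : Finset ℕ :=
  if i < n then Finset.Icc 1 i else Finset.Icc 1 n ∆ Finset.Icc 1 (i - n)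

lemma offSet_subset {n i : ℕ} (hi : i < 2 * n) : offSet n i ⊆ Finset.Icc 1 n := by
  unfold offSet
  split
  · exact Finset.Icc_subset_Icc le_rfl (by omega)
  · intro m hm
    rcases Finset.mem_symmDiff.mp hm with ⟨h1, _⟩ | ⟨h1, _⟩
    · exact h1
    · exact Finset.Icc_subset_Icc le_rfl (by omega) h1

lemma cycVert_eq_symmDiff {n i : ℕ} {x : Finset ℕ} (hx : x ⊆ Finset.Icc 1 n) :
    cycVert n x i = x ∆ offSet n i := by
  unfold cycVert offSet
  split
  · rfl
  · rw [← symmDiff_of_ge hx, symmDiff_assoc, symmDiff_left_comm]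

lemma phiZ_offSet {k n i : ℕ} (hk : 1 ≤ k) (hn : n = 2 ^ k) (hi : i < 2 * n) (j : ℕ) :
    phiZ (offSet n i) j = bitZ j (gray i) := by
  unfold offSet
  split
  · exact phiZ_Icc i j
  · rename_i h
    obtain ⟨r, rfl⟩ : ∃ r, i = n + r := ⟨i - n, by omega⟩
    have hr : r < n := by omega
    rw [show n + r - n = r by omega, phiZ_symmDiff, phiZ_Icc, phiZ_Icc, hn,
      gray_two_pow_add hk (by rw [hn] at hr; exact hr), bitZ_xor]

/- ### Valuation bounds -/

lemma val_le_of_mem {k m : ℕ} (hm : m ∈ Finset.Icc 1 (2 ^ k)) : padicValNat 2 m ≤ k := by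
  simp only [Finset.mem_Icc] at hm
  by_contra h
  push_neg at h
  have h1 : (2:ℕ) ^ padicValNat 2 m ∣ m := pow_padicValNat_dvd
  have h2 : (2:ℕ) ^ padicValNat 2 m ≤ m := Nat.le_of_dvd (by omega) h1
  have h3 : (2:ℕ) ^ (k+1) ≤ 2 ^ padicValNat 2 m := Nat.pow_le_pow_right (by norm_num) (by omega)
  have h4 : (2:ℕ) ^ k < 2 ^ (k+1) := Nat.pow_lt_pow_right (by norm_num) (by omega)
  omega

lemma phiZ_high {k j : ℕ} {x : Finset ℕ} (hx : x ⊆ Finset.Icc 1 (2 ^ k)) (hj : k < j) :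
    phiZ x j = 0 := by
  unfold phiZ
  rw [Finset.filter_false_of_mem, Finset.card_empty, Nat.cast_zero]
  intro m hm
  have := val_le_of_mem (hx hm)
  omega

/- ### Path lemma: even subsets of the odd path are spanned by its edges -/

lemma path_lemma : ∀ N, ∀ S : Finset ℕ, (∀ a ∈ S, a % 2 = 1 ∧ a ≤ N) → Even S.card →
    ∃ l : List (Finset ℕ),
      (∀ e ∈ l, ∃ j, 1 ≤ j ∧ 2*j+1 ≤ N ∧ e = ({2*j - 1, 2*j + 1} : Finset ℕ)) ∧
      l.foldr (· ∆ ·) ∅ = S := by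
  intro N
  induction N using Nat.strong_induction_on with
  | _ N ih =>
    intro S hS hcard
    rcases S.eq_empty_or_nonempty with rfl | hne
    · exact ⟨[], by simp, rfl⟩
    · set M := S.max' hne with hM
      have hMS : M ∈ S := S.max'_mem hne
      have hModd : M % 2 = 1 := (hS M hMS).1
      have hMN : M ≤ N := (hS M hMS).2
      have hcard2 : 1 < S.card := by
        rcases Nat.lt_or_ge S.card 2 with h | h
        · interval_cases hc : S.card
          · exact absurd (Finset.card_eq_zero.mp hc) (Finset.nonempty_iff_ne_empty.mp hne)
          · rw [Nat.even_iff] at hcard; omega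
        · omega
      obtain ⟨b, hbS, hbM⟩ := Finset.exists_mem_ne hcard2 M
      have hbodd : b % 2 = 1 := (hS b hbS).1
      have hble : b ≤ M := S.le_max' b hbS
      have hM3 : 3 ≤ M := by omega
      set e : Finset ℕ := {M - 2, M} with he
      have hecard : e.card = 2 := by
        rw [he, Finset.card_insert_of_notMem (by simp; omega), Finset.card_singleton]
      set S' := S ∆ e with hS'
      have hS'mem : ∀ a ∈ S', a % 2 = 1 ∧ a ≤ M - 2 := by
        intro a ha
        rw [hS', Finset.mem_symmDiff] at ha
        rcases ha with ⟨haS, hae⟩ | ⟨hae, haS⟩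
        · have h1 := (hS a haS).1
          have h2 : a ≤ M := S.le_max' a haS
          simp only [he, Finset.mem_insert, Finset.mem_singleton] at hae
          push_neg at hae
          exact ⟨h1, by omega⟩
        · simp only [he, Finset.mem_insert, Finset.mem_singleton] at hae
          rcases hae with rfl | rfl
          · exact ⟨by omega, le_rfl⟩
          · exact absurd hMS haS
      have hS'card : Even S'.card := by
        rw [even_iff_cardZ] at hcard ⊢
        rw [hS', cardZ_symmDiff, hcard, hecard]
        decide
      obtain ⟨l', hl', hfold⟩ := ih (M - 2) (by omega) S' hS'mem hS'card
      refine ⟨e :: l', ?_, ?_⟩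
      · intro f hf
        rcases List.mem_cons.mp hf with rfl | hf
        · obtain ⟨t, ht⟩ : ∃ t, M = 2 * t + 1 := ⟨M / 2, by omega⟩
          refine ⟨t, by omega, by omega, ?_⟩
          rw [he, ht, show 2 * t + 1 - 2 = 2 * t - 1 by omega]
        · obtain ⟨j, hj1, hj2, hj3⟩ := hl' f hf
          exact ⟨j, hj1, by omega, hj3⟩
      · rw [List.foldr_cons, hfold, hS', symmDiff_comm S e, symmDiff_symmDiff_cancel_left]

/- ### Doubling and spans -/

lemma two_mul_inj : Function.Injective (fun a : ℕ => 2 * a) := fun a b h => by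
  have : 2 * a = 2 * b := h
  omega

lemma foldr_image (l : List (Finset ℕ)) :
    (l.map (fun s => s.image (fun a => 2 * a))).foldr (· ∆ ·) ∅ =
      (l.foldr (· ∆ ·) ∅).image (fun a => 2 * a) := by
  induction l with
  | nil => simp
  | cons a l ih =>
      simp only [List.map_cons, List.foldr_cons, ih]
      rw [Finset.image_symmDiff _ _ two_mul_inj]

lemma image_mem_span_twoMul {X : Finset (Finset ℕ)} {z : Finset ℕ} (hz : z ∈ spanSD X) :
    z.image (fun a => 2 * a) ∈ spanSD (twoMul X) := by
  obtain ⟨l, hl, rfl⟩ := hz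
  refine ⟨l.map (fun s => s.image (fun a => 2 * a)), ?_, foldr_image l⟩
  intro s hs
  obtain ⟨t, ht, rfl⟩ := List.mem_map.mp hs
  exact Finset.mem_image_of_mem _ (hl t ht)

/- ### The kernel of `phiZ` is contained in the span -/

lemma mem_span_of_phiZ : ∀ k, 1 ≤ k → ∀ x : Finset ℕ, x ⊆ Finset.Icc 1 (2 ^ k) →
    (∀ j, phiZ x j = 0) → x ∈ spanSD (Ck k) := by
  intro k hk
  induction k, hk using Nat.le_induction with
  | base =>
      intro x hx hphi
      have hx' : x ⊆ Finset.Icc 1 2 := by simpa using hx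
      have h1 : 1 ∉ x := by
        intro h1
        have hf : x.filter (fun m => padicValNat 2 m = 0) = {1} := by
          ext m
          simp only [Finset.mem_filter, Finset.mem_singleton]
          constructor
          · rintro ⟨hmx, hv⟩
            obtain ⟨hm1, hm2⟩ := Finset.mem_Icc.mp (hx' hmx)
            interval_cases m
            · rfl
            · rw [padicValNat.self one_lt_two] at hv; omega
          · rintro rfl; exact ⟨h1, padicValNat.one⟩
        have h0 := hphi 0
        rw [phiZ, hf, Finset.card_singleton, Nat.cast_one] at h0
        exact one_ne_zero h0
      have h2 : 2 ∉ x := by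
        intro h2
        have hf : x.filter (fun m => padicValNat 2 m = 1) = {2} := by
          ext m
          simp only [Finset.mem_filter, Finset.mem_singleton]
          constructor
          · rintro ⟨hmx, hv⟩
            obtain ⟨hm1, hm2⟩ := Finset.mem_Icc.mp (hx' hmx)
            interval_cases m
            · rw [padicValNat.one] at hv; omega
            · rfl
          · rintro rfl; exact ⟨h2, padicValNat.self one_lt_two⟩
        have h0 := hphi 1
        rw [phiZ, hf, Finset.card_singleton, Nat.cast_one] at h0
        exact one_ne_zero h0
      have hxe : x = ∅ := by
        ext m
        simp only [Finset.notMem_empty, iff_false]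
        intro hm
        obtain ⟨hm1, hm2⟩ := Finset.mem_Icc.mp (hx' hm)
        interval_cases m
        · exact h1 hm
        · exact h2 hm
      rw [hxe]
      exact empty_mem_spanSD _
  | succ K hK ih =>
      intro x hx hphi
      rw [Ck_succ_eq K hK]
      set xo := x.filter (fun m => m % 2 = 1) with hxo
      set xe := x.filter (fun m => m % 2 = 0) with hxe
      have hpow : (2:ℕ) ^ (K + 1) = 2 * 2 ^ K := by ring
      have hxmem : ∀ m ∈ x, 1 ≤ m ∧ m ≤ 2 ^ (K+1) := by
        intro m hm; exact Finset.mem_Icc.mp (hx hm)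
      have hdisj : Disjoint xo xe := by
        rw [Finset.disjoint_left]
        intro m hm1 hm2
        rw [hxo, Finset.mem_filter] at hm1
        rw [hxe, Finset.mem_filter] at hm2
        omega
      have hx_eq : x = xo ∆ xe := by
        rw [hdisj.symmDiff_eq_sup]
        ext m
        simp only [Finset.sup_eq_union, Finset.mem_union, hxo, hxe, Finset.mem_filter]
        constructor
        · intro hm; rcases Nat.mod_two_eq_zero_or_one m with h | h
          · exact Or.inr ⟨hm, h⟩
          · exact Or.inl ⟨hm, h⟩
        · rintro (⟨hm, _⟩ | ⟨hm, _⟩) <;> exact hm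
      -- odd part
      have hofilter : x.filter (fun m => padicValNat 2 m = 0) = xo := by
        rw [hxo]
        apply Finset.filter_congr
        intro m hm
        have hm1 := (hxmem m hm).1
        rw [padicValNat.eq_zero_iff]
        constructor
        · rintro (h | h | h) <;> omega
        · intro h
          exact Or.inr (Or.inr (by omega))
      have hoeven : Even xo.card := by
        rw [even_iff_cardZ]
        have h0 := hphi 0
        rwa [phiZ, hofilter] at h0
      have hobound : ∀ a ∈ xo, a % 2 = 1 ∧ a ≤ 2 ^ (K+1) - 1 := by
        intro a ha
        rw [hxo, Finset.mem_filter] at ha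
        have := hxmem a ha.1
        exact ⟨ha.2, by omega⟩
      obtain ⟨l, hl, hfold⟩ := path_lemma (2 ^ (K+1) - 1) xo hobound hoeven
      have hxo_mem : xo ∈ spanSD (Ok (K+1)) := by
        refine ⟨l, ?_, hfold⟩
        intro s hs
        obtain ⟨j, hj1, hj2, rfl⟩ := hl s hs
        rw [Ok]
        refine Finset.mem_image.mpr ⟨j, Finset.mem_Icc.mpr ⟨hj1, ?_⟩, rfl⟩
        simp only [Nat.add_sub_cancel]
        omega
      -- even part
      set z := xe.image (fun m => m / 2) with hz
      have hxe_img : z.image (fun a => 2 * a) = xe := by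
        ext m
        simp only [hz, Finset.mem_image]
        constructor
        · rintro ⟨b, ⟨a, ha, rfl⟩, rfl⟩
          rw [hxe, Finset.mem_filter] at ha ⊢
          have := hxmem a ha.1
          have h2a : 2 * (a / 2) = a := by omega
          rw [h2a]
          exact ha
        · intro hm
          rw [hxe, Finset.mem_filter] at hm
          have := hxmem m hm.1
          refine ⟨m / 2, ⟨m, by rw [hxe, Finset.mem_filter]; exact hm, rfl⟩, by omega⟩
      have hzsub : z ⊆ Finset.Icc 1 (2 ^ K) := by
        intro m hm
        rw [hz] at hm
        obtain ⟨a, ha, rfl⟩ := Finset.mem_image.mp hm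
        rw [hxe, Finset.mem_filter] at ha
        have := hxmem a ha.1
        rw [Finset.mem_Icc]
        omega
      have hzphi : ∀ j, phiZ z j = 0 := by
        intro j
        set w := x.filter (fun m => padicValNat 2 m = j + 1) with hw
        have hwsub : ∀ a ∈ w, 2 ∣ a ∧ 1 ≤ a := by
          intro a ha
          rw [hw, Finset.mem_filter] at ha
          have ha1 := (hxmem a ha.1).1
          refine ⟨?_, ha1⟩
          have hdvd : (2:ℕ) ^ (j+1) ∣ a := by
            haveI : Fact (Nat.Prime 2) := ⟨Nat.prime_two⟩
            rw [padicValNat_dvd_iff_le (by omega)]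
            omega
          exact dvd_trans (dvd_pow_self 2 (Nat.succ_ne_zero j)) hdvd
        have hfz : z.filter (fun m => padicValNat 2 m = j) = w.image (fun m => m / 2) := by
          ext m
          simp only [Finset.mem_filter, Finset.mem_image, hz, hw]
          constructor
          · rintro ⟨⟨a, ha, rfl⟩, hv⟩
            rw [hxe, Finset.mem_filter] at ha
            have ha1 := (hxmem a ha.1).1
            have h2a : a = 2 * (a / 2) := by omega
            refine ⟨a, ⟨ha.1, ?_⟩, rfl⟩
            rw [h2a, val_two_mul _ (by omega), hv]
          · rintro ⟨a, ⟨hax, hva⟩, rfl⟩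
            have hd : 2 ∣ a ∧ 1 ≤ a := by
              apply hwsub
              rw [hw, Finset.mem_filter]
              exact ⟨hax, hva⟩
            have h2a : a = 2 * (a / 2) := by omega
            have hv2 : padicValNat 2 a = padicValNat 2 (a / 2) + 1 := by
              conv_lhs => rw [h2a]
              rw [val_two_mul _ (by omega)]
            constructor
            · exact ⟨a, by rw [hxe, Finset.mem_filter]; exact ⟨hax, by omega⟩, rfl⟩
            · omega
        have hcard : (w.image (fun m => m / 2)).card = w.card := by
          apply Finset.card_image_of_injOn
          intro a ha b hb hab
          have hab' : a / 2 = b / 2 := hab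
          have h1 := hwsub a ha
          have h2 := hwsub b hb
          omega
        have h0 := hphi (j + 1)
        rw [phiZ] at h0 ⊢
        rw [hfz, hcard]
        rw [hw] at *
        exact h0
      have hz_mem := ih z hzsub hzphi
      have hxe_mem : xe ∈ spanSD (twoMul (Ck K)) := by
        rw [← hxe_img]
        exact image_mem_span_twoMul hz_mem
      rw [hx_eq]
      exact symmDiff_mem_spanSD
        (spanSD_mono Finset.subset_union_left hxo_mem)
        (spanSD_mono Finset.subset_union_right hxe_mem)

lemma bitZ_inj (j a b : ℕ) (h : bitZ j a = bitZ j b) : a.testBit j = b.testBit j := by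
  unfold bitZ at h
  cases ha : a.testBit j <;> cases hb : b.testBit j <;> rw [ha, hb] at h <;>
    simp at h ⊢ <;> exact one_ne_zero h

/-- For `k ≥ 1` and `n = 2^k`, every subset `y ⊆ [n]` equals `v_i(x)` for a unique pair
`(x, i)` with `x ∈ ⟨C_k⟩` and `0 ≤ i ≤ 2n−1`; i.e., the isometric cycles `C(x)` of
length `2n`, `x ∈ ⟨C_k⟩`, partition the vertex set of `Q_n`. -/
theorem stmt_6 (k : ℕ) (hk : 1 ≤ k) (n : ℕ) (hn : n = 2 ^ k)
    (y : Finset ℕ) (hy : y ⊆ Finset.Icc 1 n) :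
    ∃! p : Finset ℕ × ℕ,
      p.1 ∈ spanSD (Ck k) ∧ p.2 ≤ 2 * n - 1 ∧ y = cycVert n p.1 p.2 := by
  have hn1 : 1 ≤ n := hn ▸ Nat.one_le_two_pow
  have h2n : 2 * n = 2 ^ (k + 1) := by rw [hn]; ring
  have hsol : ∀ x i, x ∈ spanSD (Ck k) → i < 2 * n → y = cycVert n x i →
      ∀ j, phiZ y j = bitZ j (gray i) := by
    intro x i hxs hi hyx j
    have hxsub : x ⊆ Finset.Icc 1 n := hn ▸ span_Ck_subset hxs
    rw [hyx, cycVert_eq_symmDiff hxsub, phiZ_symmDiff, span_Ck_phiZ hxs j,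
      phiZ_offSet hk hn hi j, zero_add]
  have hbit_high : ∀ i : ℕ, i < 2 * n → ∀ j, k < j → (gray i).testBit j = false := by
    intro i hi j hj
    have h1 : gray i < 2 ^ (k + 1) := gray_lt (by omega)
    exact Nat.testBit_eq_false_of_lt
      (lt_of_lt_of_le h1 (Nat.pow_le_pow_right (by norm_num) (by omega)))
  have huniq_i : ∀ i i', i < 2 * n → i' < 2 * n →
      (∀ j, j ≤ k → bitZ j (gray i) = bitZ j (gray i')) → i = i' := by
    intro i i' hi hi' hbit
    refine gray_inj (t := k + 1) (by omega) (by omega) ?_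
    apply Nat.eq_of_testBit_eq
    intro j
    rcases le_or_gt j k with hj | hj
    · exact bitZ_inj j _ _ (hbit j hj)
    · rw [hbit_high i hi j hj, hbit_high i' hi' j hj]
  -- surjectivity of the offset parity map
  have hFinj : Function.Injective
      (fun (i : Fin (2 * n)) => fun (j : Fin (k + 1)) => phiZ (offSet n i) j) := by
    intro i i' h
    have hb : ∀ j, j ≤ k → bitZ j (gray (i : ℕ)) = bitZ j (gray (i' : ℕ)) := by
      intro j hj
      have h1 := congrFun h ⟨j, by omega⟩
      simp only at h1
      rwa [phiZ_offSet hk hn i.isLt j, phiZ_offSet hk hn i'.isLt j] at h1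
    exact Fin.ext (huniq_i i i' i.isLt i'.isLt hb)
  have hcard : Fintype.card (Fin (2 * n)) = Fintype.card (Fin (k + 1) → ZMod 2) := by
    rw [Fintype.card_fin, Fintype.card_fun, ZMod.card, Fintype.card_fin, h2n]
  obtain ⟨i₀, hi₀⟩ := ((Fintype.bijective_iff_injective_and_card _).mpr
    ⟨hFinj, hcard⟩).2 (fun j => phiZ y j)
  have hoff_sub : offSet n (i₀ : ℕ) ⊆ Finset.Icc 1 n := offSet_subset i₀.isLt
  set x₀ : Finset ℕ := y ∆ offSet n (i₀ : ℕ) with hx₀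
  have hx₀sub : x₀ ⊆ Finset.Icc 1 n := by
    intro m hm
    rcases Finset.mem_symmDiff.mp hm with ⟨h1, _⟩ | ⟨h1, _⟩
    · exact hy h1
    · exact hoff_sub h1
  have hi₀' : ∀ j, j ≤ k → phiZ (offSet n (i₀ : ℕ)) j = phiZ y j := by
    intro j hj
    have h1 := congrFun hi₀ ⟨j, by omega⟩
    simpa using h1
  have hx₀phi : ∀ j, phiZ x₀ j = 0 := by
    intro j
    rw [hx₀, phiZ_symmDiff]
    rcases le_or_gt j k with hj | hj
    · rw [hi₀' j hj, CharTwo.add_self_eq_zero]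
    · rw [phiZ_high (hn ▸ hy) hj, phiZ_high (hn ▸ hoff_sub) hj, add_zero]
  have hx₀span : x₀ ∈ spanSD (Ck k) := mem_span_of_phiZ k hk x₀ (hn ▸ hx₀sub) hx₀phi
  have hy₀ : y = cycVert n x₀ (i₀ : ℕ) := by
    rw [cycVert_eq_symmDiff hx₀sub, hx₀, symmDiff_assoc, symmDiff_self, symmDiff_bot]
  refine ⟨(x₀, (i₀ : ℕ)), ⟨hx₀span, by have := i₀.isLt; omega, hy₀⟩, ?_⟩
  rintro ⟨x, i⟩ ⟨hxs, hile, hyx⟩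
  have hi : i < 2 * n := by omega
  have hbit : ∀ j, j ≤ k → bitZ j (gray i) = bitZ j (gray (i₀ : ℕ)) := by
    intro j _
    rw [← hsol x i hxs hi hyx j, ← hsol x₀ (i₀ : ℕ) hx₀span i₀.isLt hy₀ j]
  have hii : i = (i₀ : ℕ) := huniq_i i (i₀ : ℕ) hi i₀.isLt hbit
  have hxsub : x ⊆ Finset.Icc 1 n := hn ▸ span_Ck_subset hxs
  rw [cycVert_eq_symmDiff hxsub] at hyx
  have hxx : x = x₀ := by
    rw [hx₀, hyx, ← hii, symmDiff_assoc, symmDiff_self, symmDiff_bot]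
  rw [Prod.mk.injEq]
  exact ⟨hxx, hii⟩
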